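/- arXiv:2306.11127 — 3 statements merged into one kernel-verified Lean document; each statement's English description precedes it below -/
import Mathlib

section
/- Let S ⊆ ℝ^d be a finite full-dimensional set containing the origin whose nonzero points all lie on the sphere of radius 2r and are pairwise at distance at least 2r. If τ_d denotes the kissing number (maximum number of points on a sphere of radius 2r that are pairwise at distance ≥ 2r), then the group of linear isometries preserving S has order at most τ_d^d. -/
/-! A symmetry `g` of `{0} ∪ S₀` fixes `0` and is injective, so it maps `S₀` (which avoids `0`
because `r > 0`) into itself. As `S₀` spans, it contains a basis of `d` vectors; `g` is
determined by their images, each of which lies in `S₀`. Hence there are at most `|S₀| ^ d`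
symmetries, and `|S₀| ≤ τ` by the kissing bound. -/

open Module Set

section SpanningSet

variable {K V F : Type*} [DivisionRing K] [AddCommGroup V] [Module K V]

theorem exists_subset_span_eq_top_ncard_eq_finrank {s : Set V} (hs : s.Finite)
    (hspan : Submodule.span K s = ⊤) :
    ∃ t ⊆ s, Submodule.span K t = ⊤ ∧ t.ncard = finrank K V := by
  obtain ⟨t, hts, htspan, hli⟩ := exists_linearIndependent K s
  have : Fintype t := (hs.subset hts).fintype
  refine ⟨t, hts, htspan.trans hspan, ?_⟩
  rw [← finrank_top K V, ← htspan.trans hspan, finrank_span_set_eq_card hli,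
    ncard_eq_toFinset_card']

variable [FunLike F V V] [LinearMapClass F K V V]

theorem LinearMapClass.ext_on {s : Set V} (hspan : Submodule.span K s = ⊤) {f g : F}
    (h : EqOn f g s) : f = g :=
  DFunLike.ext _ _ <|
    LinearMap.congr_fun (LinearMap.ext_on (f := (f : V →ₗ[K] V)) (g := (g : V →ₗ[K] V)) hspan h)

theorem finite_and_ncard_le_pow_finrank_of_mapsTo {s : Finset V}
    (hspan : Submodule.span K (s : Set V) = ⊤) {G : Set F} (hG : ∀ f ∈ G, MapsTo f s s) :
    G.Finite ∧ G.ncard ≤ s.card ^ finrank K V := by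
  obtain ⟨t, hts, htspan, htcard⟩ :=
    exists_subset_span_eq_top_ncard_eq_finrank s.finite_toSet hspan
  have : Finite t := s.finite_toSet.subset hts
  let restrict : G → (t → s) := fun f i => ⟨f.1 i, hG f.1 f.2 (hts i.2)⟩
  have hinj : Function.Injective restrict := fun f g hfg =>
    Subtype.ext <| LinearMapClass.ext_on htspan fun x hx =>
      congrArg Subtype.val (congrFun hfg ⟨x, hx⟩)
  have hcard : Nat.card (t → s) = s.card ^ finrank K V := by
    rw [Nat.card_fun, Nat.card_coe_set_eq, htcard, Nat.card_eq_fintype_card,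
      Fintype.card_coe]
  refine ⟨finite_coe_iff.mp (Finite.of_injective restrict hinj), ?_⟩
  rw [← hcard, ← Nat.card_coe_set_eq]
  exact Nat.card_le_card_of_injective restrict hinj

end SpanningSet

theorem Set.mapsTo_of_image_insert_eq {α : Type*} {f : α → α} {a : α} {s : Set α}
    (hf : Function.Injective f) (ha : f a = a) (has : a ∉ s)
    (himage : f '' insert a s = insert a s) : MapsTo f s s := by
  intro x hx
  obtain hfx | hfx := himage.subset (mem_image_of_mem f (mem_insert_of_mem a hx))
  · exact absurd (hf (hfx.trans ha.symm) ▸ hx) has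
  · exact hfx

/-- Let `S = {0} ∪ S₀ ⊆ ℝ^d` be finite and full-dimensional, with the points of `S₀`
lying on the sphere of radius `2r` about the origin and pairwise at distance at least
`2r`. If `τ` is the kissing number in dimension `d` (an upper bound on the cardinality
of any set of points on a sphere of radius `2r` with pairwise distances at least `2r`),
then the group of linear isometries preserving `S` has order at most `τ^d`. -/
theorem card_symmetry_group_le_kissing_pow
    (d : ℕ) (r : ℝ) (hr : 0 < r) (S₀ : Finset (EuclideanSpace ℝ (Fin d)))
    (hsph : (↑S₀ : Set (EuclideanSpace ℝ (Fin d))) ⊆ Metric.sphere 0 (2 * r))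
    (hsep : ∀ u ∈ S₀, ∀ v ∈ S₀, u ≠ v → 2 * r ≤ dist u v)
    (hspan : Submodule.span ℝ (↑S₀ : Set (EuclideanSpace ℝ (Fin d))) = ⊤)
    (τ : ℕ)
    (hτ : ∀ (c : EuclideanSpace ℝ (Fin d)) (T : Finset (EuclideanSpace ℝ (Fin d))),
      (↑T : Set (EuclideanSpace ℝ (Fin d))) ⊆ Metric.sphere c (2 * r) →
      (∀ u ∈ T, ∀ v ∈ T, u ≠ v → 2 * r ≤ dist u v) → T.card ≤ τ) :
    {g : EuclideanSpace ℝ (Fin d) ≃ₗᵢ[ℝ] EuclideanSpace ℝ (Fin d) |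
        g '' ({0} ∪ (↑S₀ : Set (EuclideanSpace ℝ (Fin d)))) =
          {0} ∪ (↑S₀ : Set (EuclideanSpace ℝ (Fin d)))}.Finite ∧
      {g : EuclideanSpace ℝ (Fin d) ≃ₗᵢ[ℝ] EuclideanSpace ℝ (Fin d) |
        g '' ({0} ∪ (↑S₀ : Set (EuclideanSpace ℝ (Fin d)))) =
          {0} ∪ (↑S₀ : Set (EuclideanSpace ℝ (Fin d)))}.ncard ≤ τ ^ d := by
  have hzero : (0 : EuclideanSpace ℝ (Fin d)) ∉ (S₀ : Set _) := fun h =>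
    ne_zero_of_mem_sphere (by positivity) ⟨0, hsph h⟩ rfl
  have hmaps : ∀ g : EuclideanSpace ℝ (Fin d) ≃ₗᵢ[ℝ] EuclideanSpace ℝ (Fin d),
      g '' ({0} ∪ (S₀ : Set _)) = {0} ∪ (S₀ : Set _) → MapsTo g S₀ S₀ := fun g hg =>
    mapsTo_of_image_insert_eq g.injective g.map_zero hzero (by rwa [singleton_union] at hg)
  obtain ⟨hfin, hcard⟩ := finite_and_ncard_le_pow_finrank_of_mapsTo hspan hmaps
  refine ⟨hfin, hcard.trans ?_⟩
  rw [finrank_euclideanSpace_fin]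
  exact Nat.pow_le_pow_left (hτ 0 S₀ hsph hsep) d
end

section
/- Let X = ℤ^d ∪ ((1/2, …, 1/2) + ℤ^d) in ℝ^d with d ≥ 5. Then the minimal distance between distinct points of X is 1, and for any x ∈ X the set of points of X 1-reachable from x (chains with steps of length ≤ 1) equals the translate of ℤ^d containing x; in particular X is not 1-bonded. -/
/-- `y` is `t`-reachable from `x` within `X`. -/
def Reachable (d : ℕ) (X : Set (EuclideanSpace ℝ (Fin d))) (t : ℝ)
    (x y : EuclideanSpace ℝ (Fin d)) : Prop :=
  ∃ (m : ℕ) (c : ℕ → EuclideanSpace ℝ (Fin d)),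
    c 0 = x ∧ c m = y ∧ (∀ i ≤ m, c i ∈ X) ∧ ∀ i < m, dist (c (i + 1)) (c i) ≤ t

/-- The integer lattice `ℤ^d` inside `ℝ^d`. -/
def IntLattice (d : ℕ) : Set (EuclideanSpace ℝ (Fin d)) :=
  {v | ∀ i, ∃ n : ℤ, v i = n}

/-- The vector `(1/2, …, 1/2) ∈ ℝ^d`. -/
noncomputable def halfVec (d : ℕ) : EuclideanSpace ℝ (Fin d) := WithLp.toLp 2 (fun _ => 1 / 2)

/-- The set `X = ℤ^d ∪ ((1/2, …, 1/2) + ℤ^d)` in `ℝ^d`. -/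
def halfIntSet (d : ℕ) : Set (EuclideanSpace ℝ (Fin d)) :=
  IntLattice d ∪ {v | ∃ w ∈ IntLattice d, v = halfVec d + w}

/-!
Each coordinate of a point of `(1/2, …, 1/2) + ℤ^d` is at distance at least `1/2` from `ℤ`,
so the two cosets of `ℤ^d` making up `X` are at distance at least `√d / 2 > 1`, while distinct
points of one coset are at least `1` apart. Hence a step of length at most `1` inside `X` never
leaves a coset, and unit coordinate steps connect every coset.
-/

def intLatticeAddSubgroup (d : ℕ) : AddSubgroup (EuclideanSpace ℝ (Fin d)) where
  carrier := IntLattice d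
  add_mem' {v w} hv hw i := by
    obtain ⟨m, hm⟩ := hv i
    obtain ⟨n, hn⟩ := hw i
    exact ⟨m + n, by simp [hm, hn]⟩
  zero_mem' _ := ⟨0, by simp⟩
  neg_mem' {v} hv i := by
    obtain ⟨n, hn⟩ := hv i
    exact ⟨-n, by simp [hn]⟩

section IntLattice

variable {d : ℕ} {w : EuclideanSpace ℝ (Fin d)}

theorem single_one_mem_intLattice (i : Fin d) :
    EuclideanSpace.single i (1 : ℝ) ∈ IntLattice d :=
  fun j => ⟨if j = i then 1 else 0, by by_cases h : j = i <;> simp [h]⟩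

theorem halfVec_add_halfVec_mem_intLattice : halfVec d + halfVec d ∈ IntLattice d :=
  fun _ => ⟨1, by norm_num [halfVec]⟩

theorem halfVec_notMem_intLattice (hd : 0 < d) : halfVec d ∉ IntLattice d := by
  intro h
  obtain ⟨n, hn⟩ := h ⟨0, hd⟩
  have h2n : (2 * n : ℤ) = 1 := by
    simp only [halfVec, PiLp.toLp_apply] at hn
    exact_mod_cast (by linarith : (2 * n : ℝ) = 1)
  omega

theorem exists_eq_sum_zsmul_single (hw : w ∈ IntLattice d) :
    ∃ n : Fin d → ℤ, w = ∑ i, n i • EuclideanSpace.single i (1 : ℝ) := by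
  choose n hn using hw
  refine ⟨n, ?_⟩
  conv_lhs => rw [← (EuclideanSpace.basisFun (Fin d) ℝ).sum_repr w]
  simp [hn, Int.cast_smul_eq_zsmul]

theorem one_le_norm_of_mem_intLattice (hw : w ∈ IntLattice d) (hw0 : w ≠ 0) :
    1 ≤ ‖w‖ := by
  obtain ⟨i, hi⟩ : ∃ i, w i ≠ 0 := by
    by_contra! h
    exact hw0 (PiLp.ext h)
  obtain ⟨n, hn⟩ := hw i
  rw [hn, Int.cast_ne_zero] at hi
  calc (1 : ℝ) ≤ |(n : ℝ)| := by exact_mod_cast Int.one_le_abs hi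
    _ = ‖w i‖ := by rw [hn, Real.norm_eq_abs]
    _ ≤ ‖w‖ := PiLp.norm_apply_le w i

theorem card_div_four_le_norm_halfVec_add_sq (hw : w ∈ IntLattice d) :
    (d : ℝ) / 4 ≤ ‖halfVec d + w‖ ^ 2 := by
  have hcoord : ∀ i, 1 / 4 ≤ (halfVec d + w) i ^ 2 := by
    intro i
    obtain ⟨n, hn⟩ := hw i
    have hn_cases : (n : ℝ) ≤ -1 ∨ 0 ≤ (n : ℝ) := by
      rcases le_or_gt n (-1) with h | h
      · exact Or.inl (by exact_mod_cast h)
      · exact Or.inr (by exact_mod_cast (by omega : (0 : ℤ) ≤ n))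
    simp only [PiLp.add_apply, halfVec, hn]
    rcases hn_cases with h | h <;> nlinarith
  calc (d : ℝ) / 4 = ∑ _i : Fin d, (1 / 4 : ℝ) := by
        rw [Finset.sum_const, Finset.card_univ, Fintype.card_fin, nsmul_eq_mul]; ring
    _ ≤ ∑ i, (halfVec d + w) i ^ 2 := Finset.sum_le_sum fun i _ => hcoord i
    _ = ‖halfVec d + w‖ ^ 2 := (EuclideanSpace.real_norm_sq_eq _).symm

theorem one_lt_norm_halfVec_add (hd : 5 ≤ d) (hw : w ∈ IntLattice d) :
    1 < ‖halfVec d + w‖ := by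
  have h := card_div_four_le_norm_halfVec_add_sq hw
  have : (5 : ℝ) ≤ d := by exact_mod_cast hd
  nlinarith [norm_nonneg (halfVec d + w)]

end IntLattice

section HalfIntSet

variable {d : ℕ} {x y w : EuclideanSpace ℝ (Fin d)}

theorem add_mem_halfIntSet (hx : x ∈ halfIntSet d) (hw : w ∈ IntLattice d) :
    x + w ∈ halfIntSet d := by
  rcases hx with hx | ⟨v, hv, rfl⟩
  · exact Or.inl ((intLatticeAddSubgroup d).add_mem hx hw)
  · exact Or.inr ⟨v + w, (intLatticeAddSubgroup d).add_mem hv hw, add_assoc _ _ _⟩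

theorem sub_mem_intLattice_or_eq_halfVec_add (hx : x ∈ halfIntSet d) (hy : y ∈ halfIntSet d) :
    x - y ∈ IntLattice d ∨ ∃ w ∈ IntLattice d, x - y = halfVec d + w := by
  rcases hx with hx | ⟨u, hu, rfl⟩ <;> rcases hy with hy | ⟨v, hv, rfl⟩
  · exact Or.inl ((intLatticeAddSubgroup d).sub_mem hx hy)
  · -- `-halfVec d` lies in `halfVec d + ℤ^d`
    refine Or.inr ⟨x - v - (halfVec d + halfVec d), ?_, by abel⟩
    exact (intLatticeAddSubgroup d).sub_mem ((intLatticeAddSubgroup d).sub_mem hx hv)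
      halfVec_add_halfVec_mem_intLattice
  · exact Or.inr ⟨u - y, (intLatticeAddSubgroup d).sub_mem hu hy, add_sub_assoc _ _ _⟩
  · exact Or.inl (by
      rw [add_sub_add_left_eq_sub]
      exact (intLatticeAddSubgroup d).sub_mem hu hv)

theorem sub_mem_intLattice_of_dist_le_one (hd : 5 ≤ d) (hx : x ∈ halfIntSet d)
    (hy : y ∈ halfIntSet d) (hxy : dist x y ≤ 1) : x - y ∈ IntLattice d := by
  refine (sub_mem_intLattice_or_eq_halfVec_add hx hy).resolve_right ?_
  rintro ⟨w, hw, hxy'⟩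
  rw [dist_eq_norm, hxy'] at hxy
  exact (one_lt_norm_halfVec_add hd hw).not_ge hxy

theorem one_le_dist_of_mem_halfIntSet (hd : 5 ≤ d) (hx : x ∈ halfIntSet d)
    (hy : y ∈ halfIntSet d) (hxy : x ≠ y) : 1 ≤ dist x y := by
  rw [dist_eq_norm]
  rcases sub_mem_intLattice_or_eq_halfVec_add hx hy with h | ⟨w, hw, h⟩
  · exact one_le_norm_of_mem_intLattice h (sub_ne_zero.mpr hxy)
  · exact h ▸ (one_lt_norm_halfVec_add hd hw).le

end HalfIntSet

namespace Reachable

variable {d : ℕ} {X : Set (EuclideanSpace ℝ (Fin d))} {t : ℝ}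
  {x y z : EuclideanSpace ℝ (Fin d)}

theorem refl (hx : x ∈ X) : Reachable d X t x x :=
  ⟨0, fun _ => x, rfl, rfl, fun _ _ => hx, fun _ h => absurd h (Nat.not_lt_zero _)⟩

theorem mem_right (h : Reachable d X t x y) : y ∈ X := by
  obtain ⟨m, c, -, rfl, hX, -⟩ := h
  exact hX m le_rfl

theorem tail (h : Reachable d X t x y) (hz : z ∈ X) (hyz : dist z y ≤ t) :
    Reachable d X t x z := by
  obtain ⟨m, c, h0, hm, hX, hstep⟩ := h
  refine ⟨m + 1, fun i => if i ≤ m then c i else z, by simp [h0], by simp, ?_, ?_⟩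
  · intro i _
    dsimp only
    split_ifs with hi
    exacts [hX i hi, hz]
  · intro i hi
    rcases Nat.lt_or_ge i m with him | him
    · simpa [him, him.le, Nat.succ_le_of_lt him] using hstep i him
    · obtain rfl : i = m := le_antisymm (Nat.lt_succ_iff.mp hi) him
      simpa [hm] using hyz

theorem add_zsmul {v : EuclideanSpace ℝ (Fin d)} (h : Reachable d X t x y)
    (hX : ∀ z ∈ X, ∀ n : ℤ, z + n • v ∈ X) (hv : ‖v‖ ≤ t) (n : ℤ) :
    Reachable d X t x (y + n • v) := by
  have hy := h.mem_right
  induction n using Int.induction_on with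
  | zero => simpa using h
  | succ k ih =>
    refine ih.tail (hX y hy _) ?_
    rwa [dist_eq_norm, add_sub_add_left_eq_sub, ← sub_smul, add_sub_cancel_left, one_smul]
  | pred k ih =>
    refine ih.tail (hX y hy _) ?_
    rwa [dist_eq_norm, add_sub_add_left_eq_sub, ← sub_smul, sub_sub_cancel_left, neg_smul,
      one_smul, norm_neg]

theorem add_sum_zsmul {ι : Type*} {v : ι → EuclideanSpace ℝ (Fin d)}
    (h : Reachable d X t x y)
    (hX : ∀ z ∈ X, ∀ i, ∀ n : ℤ, z + n • v i ∈ X) (hv : ∀ i, ‖v i‖ ≤ t) (n : ι → ℤ)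
    (s : Finset ι) : Reachable d X t x (y + ∑ i ∈ s, n i • v i) := by
  classical
  induction s using Finset.induction_on with
  | empty => simpa using h
  | insert j s hj ih =>
    rw [Finset.sum_insert hj, ← add_assoc, add_right_comm]
    exact ih.add_zsmul (fun z hz => hX z hz j) (hv j) (n j)

theorem sub_mem {S : AddSubgroup (EuclideanSpace ℝ (Fin d))}
    (hS : ∀ a ∈ X, ∀ b ∈ X, dist b a ≤ t → b - a ∈ S) (h : Reachable d X t x y) :
    y - x ∈ S := by
  obtain ⟨m, c, rfl, rfl, hX, hstep⟩ := h
  suffices ∀ i ≤ m, c i - c 0 ∈ S from this m le_rfl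
  intro i
  induction i with
  | zero => simp
  | succ i ih =>
    intro hi
    rw [← sub_add_sub_cancel]
    exact S.add_mem (hS _ (hX i (by omega)) _ (hX _ hi) (hstep i hi)) (ih (by omega))

end Reachable

theorem reachable_halfIntSet_one_iff {d : ℕ} (hd : 5 ≤ d) {x y : EuclideanSpace ℝ (Fin d)}
    (hx : x ∈ halfIntSet d) : Reachable d (halfIntSet d) 1 x y ↔ y - x ∈ IntLattice d := by
  refine ⟨Reachable.sub_mem (S := intLatticeAddSubgroup d)
    fun a ha b hb hab => sub_mem_intLattice_of_dist_le_one hd hb ha hab, fun hxy => ?_⟩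
  obtain ⟨n, hn⟩ := exists_eq_sum_zsmul_single hxy
  rw [← add_sub_cancel x y, hn]
  refine (Reachable.refl hx).add_sum_zsmul ?_ (fun i => by simp) n Finset.univ
  exact fun z hz i k => add_mem_halfIntSet hz
    ((intLatticeAddSubgroup d).zsmul_mem (single_one_mem_intLattice i) k)

/-- For `X = ℤ^d ∪ ((1/2,…,1/2) + ℤ^d)` with `d ≥ 5`: the minimal distance between
distinct points of `X` is `1`; for any `x ∈ X` the set of points of `X` that are
`1`-reachable from `x` is the translate of `ℤ^d` containing `x`; and in particular `X`
is not `1`-bonded. -/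
theorem halfInt_lattice_not_one_bonded (d : ℕ) (hd : 5 ≤ d) :
    (∀ x ∈ halfIntSet d, ∀ y ∈ halfIntSet d, x ≠ y → 1 ≤ dist x y) ∧
    (∃ x ∈ halfIntSet d, ∃ y ∈ halfIntSet d, x ≠ y ∧ dist x y = 1) ∧
    (∀ x ∈ halfIntSet d,
      {y | Reachable d (halfIntSet d) 1 x y} = {y | ∃ w ∈ IntLattice d, y = x + w}) ∧
    (∃ x ∈ halfIntSet d, ∃ y ∈ halfIntSet d, ¬ Reachable d (halfIntSet d) 1 x y) := by
  have h0 : (0 : EuclideanSpace ℝ (Fin d)) ∈ halfIntSet d :=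
    Or.inl (intLatticeAddSubgroup d).zero_mem
  let e : EuclideanSpace ℝ (Fin d) := EuclideanSpace.single ⟨0, by omega⟩ 1
  refine ⟨fun x hx y hy => one_le_dist_of_mem_halfIntSet hd hx hy, ?_, ?_, ?_⟩
  · refine ⟨0, h0, e, Or.inl (single_one_mem_intLattice _), ?_, by simp [e]⟩
    simp [e, eq_comm]
  · intro x hx
    ext y
    simp only [Set.mem_ofPred_eq, reachable_halfIntSet_one_iff hd hx]
    exact ⟨fun h => ⟨y - x, h, (add_sub_cancel x y).symm⟩, by rintro ⟨w, hw, rfl⟩; simpa⟩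
  · have hhalf : halfVec d ∈ halfIntSet d :=
      Or.inr ⟨0, (intLatticeAddSubgroup d).zero_mem, (add_zero _).symm⟩
    refine ⟨0, h0, halfVec d, hhalf, ?_⟩
    rw [reachable_halfIntSet_one_iff hd h0, sub_zero]
    exact halfVec_notMem_intLattice (by omega)
end

section
/- Let X ⊆ ℝ^d be a Delone set with covering radius R, and let x ∈ X. Then the cluster C_x(2R) = X ∩ B(x, 2R) is full-dimensional: its affine hull is all of ℝ^d. -/
/-!
If the cluster `X ∩ B(x, 2R)` spanned a proper affine subspace `s`, take a unit normal `w` of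
`s` at `x` and the point `p = x + (R + δ/2) w`. Every point of `s` is at distance at least
`R + δ/2` from `p`, while the covering property provides `q ∈ X` with `|q - p| ≤ R`, hence
`|q - x| ≤ 2R + δ/2`. Since `X` is uniformly discrete, only finitely many of its points lie near the
sphere `|y - x| = 2R`, so for `δ` small `q` already lies in the cluster, hence in `s`: contradiction.
-/

open Metric
open scoped RealInnerProductSpace

theorem TotallyBounded.finite_inter_of_pairwise_le_dist {E : Type*} [PseudoMetricSpace E]
    {K S : Set E} (hK : TotallyBounded K) {r : ℝ} (hr : 0 < r)
    (hS : S.Pairwise fun y z => r ≤ dist y z) : (S ∩ K).Finite := by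
  obtain ⟨t, ht, hKt⟩ := totallyBounded_iff.1 hK (r / 2) (by positivity)
  have hcover : S ∩ K ⊆ ⋃ c ∈ t, S ∩ ball c (r / 2) := fun y ⟨hyS, hyK⟩ => by
    obtain ⟨c, hc, hyc⟩ := Set.mem_iUnion₂.1 (hKt hyK)
    exact Set.mem_biUnion hc ⟨hyS, hyc⟩
  refine (ht.biUnion fun c _ => Set.Subsingleton.finite ?_).subset hcover
  intro y ⟨hyS, hyc⟩ z ⟨hzS, hzc⟩
  by_contra hyz
  have := hS hyS hzS hyz
  linarith [dist_triangle_right y z c, mem_ball.1 hyc, mem_ball.1 hzc]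

theorem Set.Finite.exists_pos_forall_le_add_imp_le {A : Set ℝ} (hA : A.Finite) (ρ : ℝ) :
    ∃ δ > 0, ∀ a ∈ A, a ≤ ρ + δ → a ≤ ρ := by
  have hopen : IsOpen (A ∩ Set.Ioi ρ)ᶜ := (hA.subset Set.inter_subset_left).isClosed.isOpen_compl
  obtain ⟨ε, hε, hball⟩ := isOpen_iff.1 hopen ρ fun h => lt_irrefl ρ h.2
  refine ⟨ε / 2, by positivity, fun a ha haρ => not_lt.1 fun hρa => hball ?_ ⟨ha, hρa⟩⟩
  rw [Real.ball_eq_Ioo]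
  constructor <;> linarith

theorem exists_pos_inter_closedBall_add_subset {E : Type*} [PseudoMetricSpace E] {S : Set E}
    {x : E} {ρ : ℝ} (hS : (S ∩ closedBall x (ρ + 1)).Finite) :
    ∃ δ > 0, S ∩ closedBall x (ρ + δ) ⊆ closedBall x ρ := by
  obtain ⟨δ, hδ, hgap⟩ := (hS.image fun y => dist y x).exists_pos_forall_le_add_imp_le ρ
  refine ⟨min δ 1, by positivity, fun y ⟨hyS, hyx⟩ => ?_⟩
  rw [mem_closedBall] at hyx ⊢
  refine hgap _ ⟨y, ⟨hyS, ?_⟩, rfl⟩ ?_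
  · exact mem_closedBall.2 (hyx.trans (by gcongr; exact min_le_right _ _))
  · exact hyx.trans (by gcongr; exact min_le_left _ _)

theorem AffineSubspace.exists_dist_eq_forall_le_dist {E : Type*} [NormedAddCommGroup E]
    [InnerProductSpace ℝ E] [FiniteDimensional ℝ E] {s : AffineSubspace ℝ E} (hs : s ≠ ⊤)
    {x : E} (hx : x ∈ s) {t : ℝ} (ht : 0 ≤ t) :
    ∃ p, dist p x = t ∧ ∀ y ∈ s, t ≤ dist y p := by
  have hdir : s.direction ≠ ⊤ := fun h => hs ((direction_eq_top_iff_of_nonempty ⟨x, hx⟩).1 h)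
  have : Nontrivial s.directionᗮ :=
    Submodule.nontrivial_iff_ne_bot.2 (mt Submodule.orthogonal_eq_bot_iff.1 hdir)
  obtain ⟨w, hw⟩ := exists_norm_eq s.directionᗮ ht
  refine ⟨w + x, by simpa [dist_eq_norm] using hw, fun y hy => ?_⟩
  have horth : ⟪y - x, (w : E)⟫ = 0 :=
    Submodule.inner_right_of_mem_orthogonal (vsub_mem_direction hy hx) w.2
  have hpyth := norm_sub_sq_eq_norm_sq_add_norm_sq_real horth
  rw [dist_eq_norm, show y - (w + x) = y - x - w by abel]
  rw [Submodule.coe_norm] at hw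
  nlinarith [norm_nonneg (y - x), norm_nonneg (y - x - w)]

theorem affineSpan_cluster_two_covering_eq_top_general
    (d : ℕ) (X : Set (EuclideanSpace ℝ (Fin d))) (r R : ℝ)
    (hr : 0 < r)
    (hpack : ∀ x ∈ X, ∀ y ∈ X, x ≠ y → 2 * r ≤ dist x y)
    (hcov : ∀ p : EuclideanSpace ℝ (Fin d), ∃ q ∈ X, dist q p ≤ R)
    (x : EuclideanSpace ℝ (Fin d)) (hx : x ∈ X) :
    affineSpan ℝ (X ∩ Metric.closedBall x (2 * R)) = ⊤ := by
  have hR : 0 ≤ R := let ⟨_, _, hq⟩ := hcov x; dist_nonneg.trans hq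
  have hfin : (X ∩ closedBall x (2 * R + 1)).Finite :=
    (isCompact_closedBall x _).totallyBounded.finite_inter_of_pairwise_le_dist (by positivity)
      fun y hy z hz hyz => hpack y hy z hz hyz
  obtain ⟨δ, hδ, hgap⟩ := exists_pos_inter_closedBall_add_subset hfin
  by_contra hs
  have hxs : x ∈ affineSpan ℝ (X ∩ closedBall x (2 * R)) :=
    subset_affineSpan ℝ _ ⟨hx, mem_closedBall_self (by positivity)⟩
  obtain ⟨p, hpx, hp⟩ :=
    AffineSubspace.exists_dist_eq_forall_le_dist hs hxs (t := R + δ / 2) (by positivity)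
  obtain ⟨q, hqX, hqp⟩ := hcov p
  have hqx : q ∈ closedBall x (2 * R + δ) :=
    mem_closedBall.2 (by linarith [dist_triangle q p x])
  linarith [hp q (subset_affineSpan ℝ _ ⟨hqX, hgap ⟨hqX, hqx⟩⟩)]

/-- For a Delone set `X ⊆ ℝ^d` with covering radius `R` and `x ∈ X`, the cluster
`C_x(2R) = X ∩ B(x, 2R)` is full-dimensional: its affine hull is all of `ℝ^d`. -/
theorem affineSpan_cluster_two_covering_eq_top
    (d : ℕ) (X : Set (EuclideanSpace ℝ (Fin d))) (r R : ℝ)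
    (hr : 0 < r) (hrR : r ≤ R)
    (hpack : ∀ x ∈ X, ∀ y ∈ X, x ≠ y → 2 * r ≤ dist x y)
    (hcov : ∀ p : EuclideanSpace ℝ (Fin d), ∃ q ∈ X, dist q p ≤ R)
    (x : EuclideanSpace ℝ (Fin d)) (hx : x ∈ X) :
    affineSpan ℝ (X ∩ Metric.closedBall x (2 * R)) = ⊤ :=
  affineSpan_cluster_two_covering_eq_top_general d X r R hr hpack hcov x hx
end
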